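/- Bound on the modified weight α_A (Cauchy slab): for A ≥ 0, set t_A = √(2(1+A)·log n) and α_A = t^{−1}(t_A). There exist N_0 > 0 and C > 0, both independent of A, such that for all n ≥ N_0, α_A ≤ C·(1+A)·(log n)·n^{−1−A}. -/

import Mathlib

/-!
At `x = t α` zero is still a posterior median, so the posterior mass `1 - a + a I₋(x) / g(x)` of
`(-∞, 0]` is at least `1/2`, where `I₋(x) = ∫_{u ≤ 0} φ(x - u) γ(u) du ≤ φ(x)` for `x ≥ 0`.
The Cauchy convolution decays only polynomially, `g(x) ≥ (12 (1 + (x + 1)²))⁻¹`, so for large `x`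
it dominates `3 φ(x)`; this forces `a(x) ≤ 3/4`, i.e. `α g(x) ≤ 3 φ(x)`, hence
`α ≤ 18 (1 + (x + 1)²) e^{-x²/2}`. At `x² = 2 (1 + A) log n` this is `O((1 + A) log n · n^{-1-A})`.
-/

open MeasureTheory Real Set

noncomputable section

/-- Standard normal density. -/
def phi (x : ℝ) : ℝ := Real.exp (-x ^ 2 / 2) / Real.sqrt (2 * Real.pi)

/-- Standard Cauchy density. -/
def cauchyDen (x : ℝ) : ℝ := (Real.pi * (1 + x ^ 2))⁻¹

/-- Convolution `g = φ * γ`. -/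
def conv (γ : ℝ → ℝ) (x : ℝ) : ℝ := ∫ u, phi (x - u) * γ u

/-- Posterior weight `a(x) = α g(x) / ((1-α) φ(x) + α g(x))`. -/
def aWt (γ : ℝ → ℝ) (α x : ℝ) : ℝ :=
  α * conv γ x / ((1 - α) * phi x + α * conv γ x)

/-- Density of the single-coordinate posterior with respect to `volume + δ₀`. -/
def coordDen (γ : ℝ → ℝ) (α x u : ℝ) : ℝ :=
  if u = 0 then 1 - aWt γ α x else aWt γ α x * (phi (x - u) * γ u / conv γ x)

/-- Single-coordinate posterior `(1 - a(x)) δ₀ + a(x) γ_x`. -/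
def coordPost (γ : ℝ → ℝ) (α x : ℝ) : Measure ℝ :=
  (volume + Measure.dirac (0 : ℝ)).withDensity fun u => ENNReal.ofReal (coordDen γ α x u)

/-- `0` is a median of the single-coordinate posterior distribution. -/
def medianZero (γ : ℝ → ℝ) (α x : ℝ) : Prop :=
  2⁻¹ ≤ coordPost γ α x (Set.Iic 0) ∧ 2⁻¹ ≤ coordPost γ α x (Set.Ici 0)

/-- `t` is the posterior median threshold function. -/
def IsThreshold (γ : ℝ → ℝ) (t : ℝ → ℝ) : Prop :=
  ∀ α ∈ Set.Ioo (0 : ℝ) 1, 0 < t α ∧ ∀ x : ℝ, (medianZero γ α x ↔ |x| ≤ t α)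

lemma two_le_sqrt_two_mul_pi : (2 : ℝ) ≤ √(2 * π) := by
  rw [le_sqrt (by norm_num) (by positivity)]
  nlinarith [pi_gt_three]

lemma sqrt_two_mul_pi_le_three : √(2 * π) ≤ 3 := by
  rw [sqrt_le_iff]
  constructor <;> nlinarith [pi_le_four]

lemma phi_pos (x : ℝ) : 0 < phi x := by
  unfold phi
  positivity

lemma continuous_phi : Continuous phi := by
  unfold phi
  fun_prop

lemma phi_le_half_exp (x : ℝ) : phi x ≤ exp (-x ^ 2 / 2) / 2 :=
  div_le_div_of_nonneg_left (exp_pos _).le two_pos two_le_sqrt_two_mul_pi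

lemma phi_le_one (x : ℝ) : phi x ≤ 1 := by
  have : exp (-x ^ 2 / 2) ≤ 1 := exp_le_one_iff.2 (by nlinarith [sq_nonneg x])
  linarith [phi_le_half_exp x]

lemma phi_le_of_abs_le {u v : ℝ} (h : |u| ≤ |v|) : phi v ≤ phi u := by
  unfold phi
  gcongr exp (-?_ / 2) / _
  exact sq_le_sq.2 h

lemma inv_six_le_phi {v : ℝ} (hv : |v| ≤ 1) : 6⁻¹ ≤ phi v := by
  have hv2 : v ^ 2 ≤ 1 := by simpa using sq_le_sq.2 (hv.trans (abs_one).ge)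
  have hexp : 1 / 2 ≤ exp (-v ^ 2 / 2) := by linarith [add_one_le_exp (-v ^ 2 / 2)]
  unfold phi
  rw [le_div_iff₀ (by positivity)]
  nlinarith [sqrt_two_mul_pi_le_three]

lemma cauchyDen_pos (x : ℝ) : 0 < cauchyDen x := by
  unfold cauchyDen
  positivity

lemma cauchyDen_eq : cauchyDen = fun x => π⁻¹ * (1 + x ^ 2)⁻¹ := by
  ext x
  rw [cauchyDen, mul_inv]

lemma integrable_cauchyDen : Integrable cauchyDen := by
  rw [cauchyDen_eq]
  exact integrable_inv_one_add_sq.const_mul _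

lemma integral_cauchyDen : ∫ u, cauchyDen u = 1 := by
  rw [cauchyDen_eq, integral_const_mul, integral_univ_inv_one_add_sq, inv_mul_cancel₀ pi_ne_zero]

lemma cauchyDen_le_of_abs_le {u v : ℝ} (h : |u| ≤ |v|) : cauchyDen v ≤ cauchyDen u := by
  unfold cauchyDen
  gcongr (π * (1 + ?_))⁻¹
  exact sq_le_sq.2 h

lemma inv_four_mul_le_cauchyDen (x : ℝ) : (4 * (1 + x ^ 2))⁻¹ ≤ cauchyDen x := by
  unfold cauchyDen
  gcongr
  exact pi_le_four

def convIic (γ : ℝ → ℝ) (x : ℝ) : ℝ := ∫ u in Iic 0, phi (x - u) * γ u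

section Slab

variable {γ : ℝ → ℝ}

lemma integrable_phi_sub_mul (hγ : Integrable γ) (x : ℝ) :
    Integrable fun u => phi (x - u) * γ u :=
  hγ.bdd_mul (continuous_phi.comp (continuous_const.sub continuous_id)).aestronglyMeasurable
    (ae_of_all _ fun u => by rw [norm_of_nonneg (phi_pos _).le]; exact phi_le_one _)

lemma conv_pos (hγi : Integrable γ) (hγ : ∀ u, 0 < γ u) (x : ℝ) : 0 < conv γ x := by
  have hpos : ∀ u, 0 < phi (x - u) * γ u := fun u => mul_pos (phi_pos _) (hγ u)
  rw [conv, integral_pos_iff_support_of_nonneg (fun u => (hpos u).le)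
    (integrable_phi_sub_mul hγi x), Function.support_eq_univ fun u => (hpos u).ne']
  simp

lemma convIic_nonneg (hγ : ∀ u, 0 ≤ γ u) (x : ℝ) : 0 ≤ convIic γ x :=
  setIntegral_nonneg measurableSet_Iic fun u _ => mul_nonneg (phi_pos _).le (hγ u)

lemma convIic_le (hγi : Integrable γ) (hγ : ∀ u, 0 ≤ γ u) {x : ℝ} (hx : 0 ≤ x) :
    convIic γ x ≤ phi x * ∫ u, γ u :=
  calc convIic γ x ≤ ∫ u in Iic 0, phi x * γ u :=
        setIntegral_mono_on (integrable_phi_sub_mul hγi x).integrableOn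
          (hγi.const_mul _).integrableOn measurableSet_Iic fun u (hu : u ≤ 0) =>
            mul_le_mul_of_nonneg_right (phi_le_of_abs_le (by
              rw [abs_of_nonneg hx, abs_of_nonneg (by linarith)]; linarith)) (hγ u)
    _ = phi x * ∫ u in Iic 0, γ u := integral_const_mul _ _
    _ ≤ phi x * ∫ u, γ u :=
        mul_le_mul_of_nonneg_left (setIntegral_le_integral hγi (ae_of_all _ hγ)) (phi_pos x).le

lemma aWt_mem_Ioo {α x : ℝ} (hα : α ∈ Ioo 0 1) (hg : 0 < conv γ x) : aWt γ α x ∈ Ioo 0 1 := by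
  obtain ⟨hα0, hα1⟩ := hα
  have hφ := phi_pos x
  have hden : 0 < (1 - α) * phi x + α * conv γ x := by nlinarith
  exact ⟨div_pos (by positivity) hden, (div_lt_one hden).2 (by nlinarith)⟩

lemma coordPost_Iic_zero (hγi : Integrable γ) (hγ : ∀ u, 0 < γ u) {α : ℝ}
    (hα : α ∈ Ioo 0 1) (x : ℝ) :
    coordPost γ α x (Iic 0) =
      ENNReal.ofReal (aWt γ α x * (convIic γ x / conv γ x) + (1 - aWt γ α x)) := by
  have hg := conv_pos hγi hγ x
  obtain ⟨ha0, ha1⟩ := aWt_mem_Ioo hα hg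
  have hdens : ∀ᵐ u ∂volume.restrict (Iic 0), ENNReal.ofReal (coordDen γ α x u) =
      ENNReal.ofReal (aWt γ α x / conv γ x * (phi (x - u) * γ u)) := by
    refine ae_restrict_of_ae ((Measure.ae_ne volume 0).mono fun u hu => ?_)
    rw [coordDen, if_neg hu]
    ring_nf
  have hvol : ∫⁻ u in Iic 0, ENNReal.ofReal (coordDen γ α x u) =
      ENNReal.ofReal (aWt γ α x * (convIic γ x / conv γ x)) := by
    rw [lintegral_congr_ae hdens, ← ofReal_integral_eq_lintegral_ofReal
      ((integrable_phi_sub_mul hγi x).integrableOn.const_mul _)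
      (ae_of_all _ fun u => mul_nonneg (div_nonneg ha0.le hg.le) (mul_pos (phi_pos _) (hγ u)).le),
      integral_const_mul, convIic]
    ring_nf
  rw [coordPost, withDensity_apply _ measurableSet_Iic, Measure.restrict_add,
    lintegral_add_measure, hvol, restrict_dirac, if_pos self_mem_Iic, lintegral_dirac,
    coordDen, if_pos rfl, ← ENNReal.ofReal_add
      (mul_nonneg ha0.le (div_nonneg (convIic_nonneg (fun u => (hγ u).le) x) hg.le))
      (by linarith)]

lemma aWt_le_three_quarters_of_medianZero (hγi : Integrable γ) (hγ : ∀ u, 0 < γ u) {α x : ℝ}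
    (hα : α ∈ Ioo 0 1) (hleft : 3 * convIic γ x ≤ conv γ x) (hmed : medianZero γ α x) :
    aWt γ α x ≤ 3 / 4 := by
  have hg := conv_pos hγi hγ x
  obtain ⟨ha0, ha1⟩ := aWt_mem_Ioo hα hg
  have hratio : convIic γ x / conv γ x ≤ 1 / 3 := by
    rw [div_le_iff₀ hg]
    linarith
  have hratio0 : 0 ≤ convIic γ x / conv γ x :=
    div_nonneg (convIic_nonneg (fun u => (hγ u).le) x) hg.le
  have hmass := hmed.1
  rw [coordPost_Iic_zero hγi hγ hα x] at hmass
  have hhalf := ENNReal.toReal_le_of_le_ofReal (by nlinarith) hmass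
  norm_num at hhalf
  nlinarith

lemma mul_conv_le_three_mul_phi {α x : ℝ} (hα : α ∈ Ioo 0 1) (hg : 0 < conv γ x)
    (ha : aWt γ α x ≤ 3 / 4) : α * conv γ x ≤ 3 * phi x := by
  obtain ⟨hα0, hα1⟩ := hα
  have hφ := phi_pos x
  rw [aWt, div_le_iff₀ (by nlinarith)] at ha
  nlinarith

end Slab

lemma conv_cauchyDen_ge {x : ℝ} (hx : 0 ≤ x) :
    (12 * (1 + (x + 1) ^ 2))⁻¹ ≤ conv cauchyDen x := by
  have hpt : ∀ u ∈ Icc (x - 1) (x + 1),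
      6⁻¹ * (4 * (1 + (x + 1) ^ 2))⁻¹ ≤ phi (x - u) * cauchyDen u := fun u ⟨hu1, hu2⟩ =>
    mul_le_mul (inv_six_le_phi (abs_le.2 ⟨by linarith, by linarith⟩))
      ((inv_four_mul_le_cauchyDen _).trans (cauchyDen_le_of_abs_le
        (by rw [abs_of_nonneg (by linarith : 0 ≤ x + 1), abs_le]; constructor <;> linarith)))
      (by positivity) (phi_pos _).le
  calc (12 * (1 + (x + 1) ^ 2))⁻¹
      = volume.real (Icc (x - 1) (x + 1)) • (6⁻¹ * (4 * (1 + (x + 1) ^ 2))⁻¹) := by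
        rw [volume_real_Icc, smul_eq_mul]
        norm_num
        ring
    _ ≤ ∫ u in Icc (x - 1) (x + 1), phi (x - u) * cauchyDen u :=
        setIntegral_ge_of_const_le measurableSet_Icc measure_Icc_lt_top.ne hpt
          (integrable_phi_sub_mul integrable_cauchyDen x).integrableOn
    _ ≤ conv cauchyDen x :=
        setIntegral_le_integral (integrable_phi_sub_mul integrable_cauchyDen x)
          (ae_of_all _ fun u => mul_nonneg (phi_pos _).le (cauchyDen_pos u).le)

lemma three_mul_phi_le_conv_cauchyDen {x : ℝ} (hx : 10 ≤ x) : 3 * phi x ≤ conv cauchyDen x := by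
  have hexp := pow_div_factorial_le_exp (x ^ 2 / 2) (by positivity) 3
  have hx2 : 100 ≤ x ^ 2 := by nlinarith
  have hpoly : 18 * (1 + (x + 1) ^ 2) ≤ (x ^ 2 / 2) ^ 3 / (Nat.factorial 3 : ℕ) := by
    norm_num [Nat.factorial]
    nlinarith [mul_nonneg (mul_nonneg (sub_nonneg.2 hx2) (sub_nonneg.2 hx2)) (sq_nonneg x)]
  calc 3 * phi x ≤ 3 * (exp (-x ^ 2 / 2) / 2) := by gcongr; exact phi_le_half_exp x
    _ = (2 / 3 * exp (x ^ 2 / 2))⁻¹ := by rw [neg_div, exp_neg]; field_simp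
    _ ≤ (12 * (1 + (x + 1) ^ 2))⁻¹ := inv_anti₀ (by positivity) (by linarith)
    _ ≤ conv cauchyDen x := conv_cauchyDen_ge (by linarith)

lemma le_of_medianZero_cauchyDen {α x : ℝ} (hα : α ∈ Ioo 0 1) (hx : 10 ≤ x)
    (hmed : medianZero cauchyDen α x) : α ≤ 18 * (1 + (x + 1) ^ 2) * exp (-x ^ 2 / 2) := by
  have hleft : 3 * convIic cauchyDen x ≤ conv cauchyDen x := by
    have := convIic_le integrable_cauchyDen (fun u => (cauchyDen_pos u).le) (by linarith : 0 ≤ x)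
    rw [integral_cauchyDen, mul_one] at this
    linarith [three_mul_phi_le_conv_cauchyDen hx]
  have hαg := mul_conv_le_three_mul_phi hα (conv_pos integrable_cauchyDen cauchyDen_pos x)
    (aWt_le_three_quarters_of_medianZero integrable_cauchyDen cauchyDen_pos hα hleft hmed)
  have hK : 0 < 12 * (1 + (x + 1) ^ 2) := by positivity
  calc α = 12 * (1 + (x + 1) ^ 2) * (α * (12 * (1 + (x + 1) ^ 2))⁻¹) := by field_simp
    _ ≤ 12 * (1 + (x + 1) ^ 2) * (3 * phi x) := mul_le_mul_of_nonneg_left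
        ((mul_le_mul_of_nonneg_left (conv_cauchyDen_ge (by linarith)) hα.1.le).trans hαg) hK.le
    _ ≤ 12 * (1 + (x + 1) ^ 2) * (3 * (exp (-x ^ 2 / 2) / 2)) := by
        gcongr
        exact phi_le_half_exp x
    _ = 18 * (1 + (x + 1) ^ 2) * exp (-x ^ 2 / 2) := by ring

/-- Lemma 8: bound on the modified weight `α_A`.
For `A ≥ 0`, with `t_A = √(2(1+A) log n)` and `α_A = t⁻¹(t_A)`, there exist
`N₀` and `C > 0`, independent of `A`, such that for `n ≥ N₀`,
`α_A ≤ C (1+A) (log n) n^{-1-A}`. -/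
theorem alphaA_bound :
    ∃ N0 : ℕ, ∃ C > (0 : ℝ), ∀ A : ℝ, 0 ≤ A → ∀ n : ℕ, N0 ≤ n →
      ∀ t : ℝ → ℝ, IsThreshold cauchyDen t →
      ∀ αA ∈ Set.Ioo (0 : ℝ) 1, t αA = Real.sqrt (2 * (1 + A) * Real.log n) →
        αA ≤ C * (1 + A) * Real.log n * (n : ℝ) ^ (-1 - A) := by
  refine ⟨⌈exp 50⌉₊, 72, by norm_num, fun A hA n hn t ht α hα htα => ?_⟩
  have hn50 : exp 50 ≤ n := Nat.ceil_le.1 hn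
  have hn0 : (0 : ℝ) < n := (exp_pos 50).trans_le hn50
  have hL : 50 ≤ log n := (le_log_iff_exp_le hn0).2 hn50
  set x := √(2 * (1 + A) * log n)
  have hx2 : x ^ 2 = 2 * (1 + A) * log n := sq_sqrt (by nlinarith)
  have hx : 10 ≤ x := by nlinarith [sqrt_nonneg (2 * (1 + A) * log n)]
  have hmed : medianZero cauchyDen α x :=
    ((ht α hα).2 x).2 (by rw [abs_of_nonneg (sqrt_nonneg _), htα])
  have hexp : exp (-x ^ 2 / 2) = (n : ℝ) ^ (-1 - A) := by
    rw [rpow_def_of_pos hn0, hx2]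
    ring_nf
  calc α ≤ 18 * (1 + (x + 1) ^ 2) * exp (-x ^ 2 / 2) := le_of_medianZero_cauchyDen hα hx hmed
    _ ≤ 18 * (2 * x ^ 2) * exp (-x ^ 2 / 2) := by gcongr; nlinarith
    _ = 72 * (1 + A) * log n * (n : ℝ) ^ (-1 - A) := by rw [hexp, hx2]; ring

end
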